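/- Expected log-probability under a Dirichlet distribution. Fix K ≥ 2 and α : Fin K → ℝ with α_k > 0 for all k, and set α₀ = ∑_k α_k. Then for every k ∈ Fin K, ∫_S log(X_k(x)) · f_α(x) dx = (ψ(α_k) − ψ(α₀)) · B(α); equivalently, under the normalized Dirichlet distribution Dir(α), E[log p_k] = ψ(α_k) − ψ(α₀). -/

import Mathlib

open MeasureTheory Real
open scoped ENNReal NNReal

/-- The open simplex `S = {x ∈ ℝ^{K-1} | ∀ i, 0 < xᵢ ∧ ∑ i, xᵢ < 1}`. -/
def openSimplex (K : ℕ) : Set (Fin (K - 1) → ℝ) :=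
  {x | (∀ i, 0 < x i) ∧ ∑ i, x i < 1}

/-- The `k`-th barycentric coordinate: `X_k(x) = x_k` for `k < K-1`, and
`X_{K-1}(x) = 1 - ∑ i, x_i`. -/
noncomputable def bary (K : ℕ) (k : Fin K) (x : Fin (K - 1) → ℝ) : ℝ :=
  if h : (k : ℕ) < K - 1 then x ⟨k, h⟩ else 1 - ∑ i, x i

/-- The unnormalized Dirichlet density `f_α(x) = ∏ k, X_k(x)^(α k - 1)`
(real powers). -/
noncomputable def dirichletDensity {K : ℕ} (α : Fin K → ℝ) (x : Fin (K - 1) → ℝ) : ℝ :=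
  ∏ k, (bary K k x) ^ (α k - 1)

/-- The multivariate Beta function `B(α) = (∏ k, Γ(α k)) / Γ(∑ k, α k)`. -/
noncomputable def multiBeta {K : ℕ} (α : Fin K → ℝ) : ℝ :=
  (∏ k, Real.Gamma (α k)) / Real.Gamma (∑ k, α k)

/-- The digamma function `ψ(t)`: the derivative at `t` of `log ∘ Γ`. -/
noncomputable def digamma (t : ℝ) : ℝ :=
  deriv (fun s => Real.log (Real.Gamma s)) t

/-!
Differentiate the Dirichlet integral `∫_S f_α = B(α)` in `α_k`: the derivative of the integrand
is `log X_k · f_α`, and that of `B(α) = Γ(α_k) ∏_{j ≠ k} Γ(α_j) / Γ(α_k + ∑_{j ≠ k} α_j)` is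
`(ψ(α_k) - ψ(α₀)) B(α)`. Differentiating under the integral sign is legitimate because for
`b ∈ (0, 1]` and `|t - α_k| < α_k / 2` we have `|log b| b^(t - α_k) ≤ (4 / α_k) b^(-3α_k/4)`, and
`b^(-3α_k/4) f_α` is the Dirichlet density with `α_k` replaced by `α_k / 4`.

The Dirichlet integral goes by induction on `K`: in `x = (u, (1 - u) z)`, with `z` in the simplex
of one dimension less, `f_α(x) = u^(α_0 - 1) (1 - u)^(α'₀ - (K - 1)) f_α'(z)` for
`α' = (α_1, …, α_{K-1})`, and `z ↦ (1 - u) z` has Jacobian `(1 - u)^(K - 2)`. Tonelli then leaves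
`B(α')` times the Beta integral `∫₀¹ u^(α_0 - 1) (1 - u)^(α'₀ - 1) du`. This part is done with
lower Lebesgue integrals, so that no integrability has to be checked along the way.
-/

open Set

lemma Complex.ofReal_rpow_mul_one_sub_rpow {a b x : ℝ} (hx : x ∈ Icc (0 : ℝ) 1) :
    ((x ^ (a - 1) * (1 - x) ^ (b - 1) : ℝ) : ℂ) =
      (x : ℂ) ^ ((a : ℂ) - 1) * (1 - (x : ℂ)) ^ ((b : ℂ) - 1) := by
  rw [Complex.ofReal_mul, Complex.ofReal_cpow hx.1, Complex.ofReal_cpow (sub_nonneg.2 hx.2)]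
  push_cast
  rfl

lemma Complex.betaIntegral_ofReal (a b : ℝ) :
    Complex.betaIntegral a b =
      ((∫ x in Ioc (0 : ℝ) 1, x ^ (a - 1) * (1 - x) ^ (b - 1) : ℝ) : ℂ) := by
  rw [Complex.betaIntegral, intervalIntegral.integral_of_le zero_le_one,
    ← integral_complex_ofReal]
  exact setIntegral_congr_fun measurableSet_Ioc fun x hx =>
    (Complex.ofReal_rpow_mul_one_sub_rpow (Ioc_subset_Icc_self hx)).symm

lemma integrableOn_rpow_mul_one_sub_rpow {a b : ℝ} (ha : 0 < a) (hb : 0 < b) :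
    IntegrableOn (fun x : ℝ => x ^ (a - 1) * (1 - x) ^ (b - 1)) (Ioo 0 1) := by
  have h := Complex.betaIntegral_convergent (u := a) (v := b) (by simpa) (by simpa)
  rw [intervalIntegrable_iff_integrableOn_Ioc_of_le zero_le_one] at h
  refine (IntegrableOn.congr_fun h.re (fun x hx => ?_) measurableSet_Ioc).mono_set
    Ioo_subset_Ioc_self
  rw [← Complex.ofReal_rpow_mul_one_sub_rpow (Ioc_subset_Icc_self hx)]
  exact Complex.ofReal_re _

lemma integral_rpow_mul_one_sub_rpow {a b : ℝ} (ha : 0 < a) (hb : 0 < b) :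
    ∫ x in Ioo (0 : ℝ) 1, x ^ (a - 1) * (1 - x) ^ (b - 1) =
      Gamma a * Gamma b / Gamma (a + b) := by
  have key := Complex.Gamma_mul_Gamma_eq_betaIntegral (s := a) (t := b) (by simpa) (by simpa)
  rw [Complex.betaIntegral_ofReal, ← Complex.ofReal_add, Complex.Gamma_ofReal,
    Complex.Gamma_ofReal, Complex.Gamma_ofReal] at key
  rw [← integral_Ioc_eq_integral_Ioo, eq_div_iff (Gamma_pos_of_pos (add_pos ha hb)).ne', mul_comm]
  exact_mod_cast key.symm

lemma lintegral_rpow_mul_one_sub_rpow {a b : ℝ} (ha : 0 < a) (hb : 0 < b) :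
    ∫⁻ x in Ioo (0 : ℝ) 1, ENNReal.ofReal (x ^ (a - 1) * (1 - x) ^ (b - 1)) =
      ENNReal.ofReal (Gamma a * Gamma b / Gamma (a + b)) := by
  rw [← integral_rpow_mul_one_sub_rpow ha hb, ofReal_integral_eq_lintegral_ofReal
    (integrableOn_rpow_mul_one_sub_rpow ha hb)]
  filter_upwards [ae_restrict_mem measurableSet_Ioo] with x hx
  exact mul_nonneg (rpow_nonneg hx.1.le _) (rpow_nonneg (sub_nonneg.2 hx.2.le) _)

lemma lintegral_eq_ofReal_pow_mul_lintegral_comp_smul {E : Type*} [NormedAddCommGroup E]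
    [NormedSpace ℝ E] [MeasurableSpace E] [BorelSpace E] [FiniteDimensional ℝ E]
    (μ : Measure E) [μ.IsAddHaarMeasure] (f : E → ℝ≥0∞) {r : ℝ} (hr : 0 < r) :
    ∫⁻ x, f x ∂μ = ENNReal.ofReal (r ^ Module.finrank ℝ E) * ∫⁻ x, f (r • x) ∂μ := by
  have hmap := Measure.map_addHaar_smul μ (inv_ne_zero hr.ne')
  rw [inv_pow, inv_inv, abs_of_pos (by positivity)] at hmap
  calc ∫⁻ x, f x ∂μ = ∫⁻ x, f (r • r⁻¹ • x) ∂μ := by simp [smul_smul, hr.ne']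
    _ = ∫⁻ x, f (r • x) ∂(μ.map (r⁻¹ • ·)) :=
      (lintegral_map_equiv (fun x => f (r • x))
        (MeasurableEquiv.smul₀ r⁻¹ (inv_ne_zero hr.ne'))).symm
    _ = _ := by rw [hmap, lintegral_smul_measure, smul_eq_mul]

lemma measurableSet_openSimplex (K : ℕ) : MeasurableSet (openSimplex K) := by
  have hpos : IsOpen {x : Fin (K - 1) → ℝ | ∀ i, 0 < x i} := by
    simp only [ofPred_forall]
    exact isOpen_iInter_of_finite fun i => isOpen_lt continuous_const (continuous_apply i)
  exact (hpos.inter (isOpen_lt (continuous_finsetSum _ fun i _ => continuous_apply i)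
    continuous_const)).measurableSet

lemma measurable_bary (K : ℕ) (k : Fin K) : Measurable (bary K k) := by
  unfold bary
  split
  · exact measurable_pi_apply _
  · exact measurable_const.sub (Finset.univ.measurable_sum fun i _ => measurable_pi_apply i)

lemma measurable_dirichletDensity {K : ℕ} (α : Fin K → ℝ) :
    Measurable (dirichletDensity α) :=
  Finset.univ.measurable_prod fun k _ => (measurable_bary K k).pow_const _

lemma bary_pos {K : ℕ} {x : Fin (K - 1) → ℝ} (hx : x ∈ openSimplex K) (k : Fin K) :
    0 < bary K k x := by
  unfold bary
  split
  · exact hx.1 _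
  · linarith [hx.2]

lemma bary_le_one {K : ℕ} {x : Fin (K - 1) → ℝ} (hx : x ∈ openSimplex K) (k : Fin K) :
    bary K k x ≤ 1 := by
  have hsum : 0 ≤ ∑ i, x i := Finset.sum_nonneg fun i _ => (hx.1 i).le
  unfold bary
  split
  · exact (Finset.single_le_sum (fun i _ => (hx.1 i).le) (Finset.mem_univ _)).trans hx.2.le
  · linarith

lemma dirichletDensity_nonneg {K : ℕ} (α : Fin K → ℝ) {x : Fin (K - 1) → ℝ}
    (hx : x ∈ openSimplex K) : 0 ≤ dirichletDensity α x :=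
  Finset.prod_nonneg fun k _ => rpow_nonneg (bary_pos hx k).le _

lemma mem_openSimplex_iff_forall_bary_pos {n : ℕ} {x : Fin n → ℝ} :
    x ∈ openSimplex (n + 1) ↔ ∀ k, 0 < bary (n + 1) k x := by
  refine ⟨bary_pos, fun h => ⟨fun i => ?_, ?_⟩⟩
  · simpa [bary] using h i.castSucc
  · simpa [bary] using h (Fin.last n)

lemma bary_zero_cons {n : ℕ} (u : ℝ) (y : Fin n → ℝ) :
    bary (n + 2) 0 (Fin.cons u y : Fin (n + 1) → ℝ) = u := by
  simp [bary]

lemma bary_succ_cons_smul {n : ℕ} (u : ℝ) (z : Fin n → ℝ) (j : Fin (n + 1)) :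
    bary (n + 2) j.succ (Fin.cons u ((1 - u) • z) : Fin (n + 1) → ℝ) =
      (1 - u) * bary (n + 1) j z := by
  by_cases hj : (j : ℕ) < n
  · rw [bary, dif_pos (by simpa using hj), bary, dif_pos (by simpa using hj)]
    exact Fin.cons_succ (α := fun _ => ℝ) u ((1 - u) • z) ⟨j, hj⟩
  · simp [bary, hj, Fin.sum_univ_succ, ← Finset.mul_sum]
    ring

lemma cons_smul_mem_openSimplex_iff {n : ℕ} {u : ℝ} (hu : u ∈ Ioo (0 : ℝ) 1)
    (z : Fin n → ℝ) :
    (Fin.cons u ((1 - u) • z) : Fin (n + 1) → ℝ) ∈ openSimplex (n + 2) ↔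
      z ∈ openSimplex (n + 1) := by
  rw [mem_openSimplex_iff_forall_bary_pos, mem_openSimplex_iff_forall_bary_pos,
    Fin.forall_fin_succ, bary_zero_cons]
  simp only [bary_succ_cons_smul, mul_pos_iff_of_pos_left (sub_pos.2 hu.2), hu.1, true_and]

lemma mem_Ioo_of_cons_mem_openSimplex {n : ℕ} {u : ℝ} {y : Fin n → ℝ}
    (h : (Fin.cons u y : Fin (n + 1) → ℝ) ∈ openSimplex (n + 2)) : u ∈ Ioo (0 : ℝ) 1 := by
  have hy : ∀ i, 0 < y i := fun i => by simpa using h.1 i.succ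
  have hsum : u + ∑ i, y i < 1 := by simpa [Fin.sum_cons] using h.2
  refine ⟨by simpa using h.1 (0 : Fin (n + 1)), ?_⟩
  linarith [Finset.sum_nonneg fun i (_ : i ∈ Finset.univ) => (hy i).le]

lemma dirichletDensity_cons_smul {n : ℕ} (α : Fin (n + 2) → ℝ) {u : ℝ}
    (hu : u ∈ Ioo (0 : ℝ) 1) {z : Fin n → ℝ} (hz : z ∈ openSimplex (n + 1)) :
    dirichletDensity α (Fin.cons u ((1 - u) • z) : Fin (n + 1) → ℝ) =
      u ^ (α 0 - 1) * (1 - u) ^ (∑ j, Fin.tail α j - (n + 1)) *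
        dirichletDensity (Fin.tail α) z := by
  have h1u : 0 < 1 - u := sub_pos.2 hu.2
  have hsum : ∑ j, (Fin.tail α j - 1) = ∑ j, Fin.tail α j - (n + 1) := by
    simp [Finset.sum_sub_distrib]
  rw [dirichletDensity, Fin.prod_univ_succ, bary_zero_cons, mul_assoc]
  congr 1
  simp_rw [bary_succ_cons_smul, mul_rpow h1u.le (bary_pos hz _).le]
  rw [Finset.prod_mul_distrib, ← rpow_sum_of_pos h1u, ← hsum]
  rfl

lemma indicator_dirichletDensity_cons_smul {n : ℕ} (α : Fin (n + 2) → ℝ) {u : ℝ}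
    (hu : u ∈ Ioo (0 : ℝ) 1) :
    (fun z : Fin n → ℝ => (openSimplex (n + 2)).indicator
      (fun x => ENNReal.ofReal (dirichletDensity α x)) (Fin.cons u ((1 - u) • z))) =
      (openSimplex (n + 1)).indicator (fun z => ENNReal.ofReal
        (u ^ (α 0 - 1) * (1 - u) ^ (∑ j, Fin.tail α j - (n + 1))) *
          ENNReal.ofReal (dirichletDensity (Fin.tail α) z)) := by
  have hcoef : 0 ≤ u ^ (α 0 - 1) * (1 - u) ^ (∑ j, Fin.tail α j - (n + 1)) :=
    mul_nonneg (rpow_nonneg hu.1.le _) (rpow_nonneg (sub_nonneg.2 hu.2.le) _)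
  funext z
  by_cases hz : z ∈ openSimplex (n + 1)
  · rw [indicator_of_mem ((cons_smul_mem_openSimplex_iff hu z).2 hz), indicator_of_mem hz,
      dirichletDensity_cons_smul α hu hz, ENNReal.ofReal_mul hcoef]
  · rw [indicator_of_notMem (mt (cons_smul_mem_openSimplex_iff hu z).1 hz),
      indicator_of_notMem hz]

lemma lintegral_indicator_dirichletDensity_cons {n : ℕ} (α : Fin (n + 2) → ℝ)
    (htail : ∫⁻ z in openSimplex (n + 1), ENNReal.ofReal (dirichletDensity (Fin.tail α) z) =
      ENNReal.ofReal (multiBeta (Fin.tail α))) (u : ℝ) :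
    ∫⁻ y, (openSimplex (n + 2)).indicator (fun x => ENNReal.ofReal (dirichletDensity α x))
        (Fin.cons u y : Fin (n + 1) → ℝ) =
      (Ioo 0 1).indicator
        (fun u => ENNReal.ofReal (u ^ (α 0 - 1) * (1 - u) ^ (∑ j, Fin.tail α j - 1))) u *
        ENNReal.ofReal (multiBeta (Fin.tail α)) := by
  by_cases hu : u ∈ Ioo 0 1
  swap
  · have hzero : ∀ y : Fin n → ℝ, (openSimplex (n + 2)).indicator
        (fun x => ENNReal.ofReal (dirichletDensity α x)) (Fin.cons u y : Fin (n + 1) → ℝ) = 0 :=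
      fun y => indicator_of_notMem (fun h => hu (mem_Ioo_of_cons_mem_openSimplex h)) _
    rw [lintegral_congr hzero, indicator_of_notMem hu, lintegral_zero, zero_mul]
  have h1u : 0 < 1 - u := sub_pos.2 hu.2
  have hpow : (1 - u) ^ n * (u ^ (α 0 - 1) * (1 - u) ^ (∑ j, Fin.tail α j - (n + 1))) =
      u ^ (α 0 - 1) * (1 - u) ^ (∑ j, Fin.tail α j - 1) := by
    rw [mul_left_comm, ← rpow_natCast, ← rpow_add h1u]
    ring_nf
  rw [lintegral_eq_ofReal_pow_mul_lintegral_comp_smul volume _ h1u, indicator_of_mem hu,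
    indicator_dirichletDensity_cons_smul α hu,
    lintegral_indicator (s := openSimplex (n + 1)) (measurableSet_openSimplex _),
    lintegral_const_mul' _ _ ENNReal.ofReal_ne_top, htail, Module.finrank_fin_fun, ← mul_assoc,
    ← ENNReal.ofReal_mul (by positivity), hpow]

lemma multiBeta_eq_mul_multiBeta_tail {n : ℕ} (α : Fin (n + 2) → ℝ) (hα : ∀ k, 0 < α k) :
    multiBeta α =
      Gamma (α 0) * Gamma (∑ j, Fin.tail α j) / Gamma (α 0 + ∑ j, Fin.tail α j) *
        multiBeta (Fin.tail α) := by
  have htail : Gamma (∑ j, Fin.tail α j) ≠ 0 :=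
    (Gamma_pos_of_pos (Finset.sum_pos (fun j _ => hα j.succ) Finset.univ_nonempty)).ne'
  rw [multiBeta, multiBeta, Fin.prod_univ_succ, Fin.sum_univ_succ]
  field_simp
  rfl

lemma lintegral_dirichletDensity_one (α : Fin 1 → ℝ) (hα : 0 < α 0) :
    ∫⁻ x in openSimplex 1, ENNReal.ofReal (dirichletDensity α x) =
      ENNReal.ofReal (multiBeta α) := by
  have hS : openSimplex 1 = univ := by ext x; simp [openSimplex]
  have hf : ∀ x, dirichletDensity α x = 1 := by simp [dirichletDensity, bary]
  have hB : multiBeta α = 1 := by simp [multiBeta, (Gamma_pos_of_pos hα).ne']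
  simp [hS, hf, hB, volume_pi]

lemma lintegral_dirichletDensity_succ {n : ℕ} (α : Fin (n + 2) → ℝ) (hα : ∀ k, 0 < α k)
    (htail : ∫⁻ z in openSimplex (n + 1), ENNReal.ofReal (dirichletDensity (Fin.tail α) z) =
      ENNReal.ofReal (multiBeta (Fin.tail α))) :
    ∫⁻ x in openSimplex (n + 2), ENNReal.ofReal (dirichletDensity α x) =
      ENNReal.ofReal (multiBeta α) := by
  have hsum : 0 < ∑ j, Fin.tail α j :=
    Finset.sum_pos (fun j _ => hα j.succ) Finset.univ_nonempty
  have hcons := (volume_preserving_piFinSuccAbove (fun _ : Fin (n + 1) => ℝ) 0).symm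
  have hmeas : Measurable ((openSimplex (n + 2)).indicator
      fun x => ENNReal.ofReal (dirichletDensity α x)) :=
    (measurable_dirichletDensity α).ennreal_ofReal.indicator (measurableSet_openSimplex _)
  rw [← lintegral_indicator (measurableSet_openSimplex _)]
  -- the domain is `Fin (n + 2 - 1) → ℝ`, which `piFinSuccAbove` only sees as `Fin (n + 1) → ℝ`
  change ∫⁻ x : Fin (n + 1) → ℝ, _ = _
  rw [← hcons.lintegral_comp_emb (MeasurableEquiv.measurableEmbedding _), Measure.volume_eq_prod,
    lintegral_prod _ (by exact (hmeas.comp (MeasurableEquiv.measurable _)).aemeasurable)]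
  simp_rw [MeasurableEquiv.piFinSuccAbove_symm_apply, Fin.insertNthEquiv, Equiv.coe_fn_mk,
    Fin.insertNth_zero', lintegral_indicator_dirichletDensity_cons α htail]
  rw [lintegral_mul_const' _ _ ENNReal.ofReal_ne_top, lintegral_indicator measurableSet_Ioo,
    lintegral_rpow_mul_one_sub_rpow (hα 0) hsum, ← ENNReal.ofReal_mul
      (div_nonneg (mul_nonneg (Gamma_nonneg_of_nonneg (hα 0).le) (Gamma_nonneg_of_nonneg hsum.le))
        (Gamma_nonneg_of_nonneg (by linarith [hα 0]))),
    multiBeta_eq_mul_multiBeta_tail α hα]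

theorem lintegral_dirichletDensity {n : ℕ} (α : Fin (n + 1) → ℝ) (hα : ∀ k, 0 < α k) :
    ∫⁻ x in openSimplex (n + 1), ENNReal.ofReal (dirichletDensity α x) =
      ENNReal.ofReal (multiBeta α) := by
  induction n with
  | zero => exact lintegral_dirichletDensity_one α (hα 0)
  | succ n ih => exact lintegral_dirichletDensity_succ α hα (ih _ fun j => hα j.succ)

lemma multiBeta_nonneg {K : ℕ} {α : Fin K → ℝ} (hα : ∀ k, 0 < α k) : 0 ≤ multiBeta α :=
  div_nonneg (Finset.prod_nonneg fun k _ => Gamma_nonneg_of_nonneg (hα k).le)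
    (Gamma_nonneg_of_nonneg (Finset.sum_nonneg fun k _ => (hα k).le))

lemma integrableOn_dirichletDensity {n : ℕ} (α : Fin (n + 1) → ℝ) (hα : ∀ k, 0 < α k) :
    IntegrableOn (dirichletDensity α) (openSimplex (n + 1)) := by
  refine ⟨(measurable_dirichletDensity α).aestronglyMeasurable, ?_⟩
  rw [hasFiniteIntegral_iff_ofReal (ae_restrict_of_forall_mem (measurableSet_openSimplex _)
    fun x hx => dirichletDensity_nonneg α hx), lintegral_dirichletDensity α hα]
  exact ENNReal.ofReal_lt_top

theorem integral_dirichletDensity {n : ℕ} (α : Fin (n + 1) → ℝ) (hα : ∀ k, 0 < α k) :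
    ∫ x in openSimplex (n + 1), dirichletDensity α x = multiBeta α := by
  rw [integral_eq_lintegral_of_nonneg_ae (ae_restrict_of_forall_mem (measurableSet_openSimplex _)
      fun x hx => dirichletDensity_nonneg α hx)
      (measurable_dirichletDensity α).aestronglyMeasurable,
    lintegral_dirichletDensity α hα, ENNReal.toReal_ofReal (multiBeta_nonneg hα)]

lemma update_pos {ι : Type*} [DecidableEq ι] {α : ι → ℝ} (hα : ∀ i, 0 < α i) (i : ι)
    {t : ℝ} (ht : 0 < t) (j : ι) : 0 < Function.update α i t j := by
  rcases eq_or_ne j i with rfl | h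
  · simpa using ht
  · simpa [h] using hα j

lemma hasDerivAt_Gamma_digamma {t : ℝ} (ht : 0 < t) :
    HasDerivAt Gamma (digamma t * Gamma t) t := by
  have hΓ := (differentiableAt_Gamma fun m h => by
    linarith [(Nat.cast_nonneg m : (0 : ℝ) ≤ m)]).hasDerivAt
  have hpos := Gamma_pos_of_pos ht
  rwa [digamma, (hΓ.log hpos.ne').deriv, div_mul_cancel₀ _ hpos.ne']

lemma hasDerivAt_multiBeta_update {K : ℕ} (α : Fin K → ℝ) (hα : ∀ k, 0 < α k) (k : Fin K) :
    HasDerivAt (fun t => multiBeta (Function.update α k t))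
      ((digamma (α k) - digamma (∑ j, α j)) * multiBeta α) (α k) := by
  set P := ∏ j ∈ Finset.univ \ {k}, Gamma (α j)
  set c := ∑ j ∈ Finset.univ \ {k}, α j
  have hac : 0 < α k + c := add_pos_of_pos_of_nonneg (hα k) (Finset.sum_nonneg fun j _ => (hα j).le)
  have heq : ∀ t, multiBeta (Function.update α k t) = Gamma t * P / Gamma (t + c) := by
    intro t
    rw [multiBeta, Finset.sum_update_of_mem (Finset.mem_univ k)]
    simp_rw [Function.apply_update (fun _ => Gamma)]
    rw [Finset.prod_update_of_mem (Finset.mem_univ k)]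
  have hB : multiBeta α = Gamma (α k) * P / Gamma (α k + c) := by
    rw [← heq, Function.update_eq_self]
  have hsum : ∑ j, α j = α k + c := by
    rw [← Finset.sum_update_of_mem (Finset.mem_univ k), Function.update_eq_self]
  simp_rw [hB, hsum, heq]
  refine (((hasDerivAt_Gamma_digamma (hα k)).mul_const P).fun_div
    ((hasDerivAt_Gamma_digamma hac).comp_add_const (α k) c)
    (Gamma_pos_of_pos hac).ne').congr_deriv ?_
  field_simp

lemma abs_log_mul_rpow_le {b s t ε : ℝ} (hb0 : 0 < b) (hb1 : b ≤ 1) (hε : 0 < ε)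
    (hst : s + ε ≤ t) : |log b| * b ^ t ≤ ε⁻¹ * b ^ s := by
  calc |log b| * b ^ t = |log b * b ^ ε| * b ^ (t - ε) := by
        rw [abs_mul, abs_of_pos (rpow_pos_of_pos hb0 ε), mul_assoc, ← rpow_add hb0,
          add_sub_cancel]
    _ ≤ ε⁻¹ * b ^ s :=
        mul_le_mul (by simpa using (abs_log_mul_self_rpow_lt b ε hb0 hb1 hε).le)
          (rpow_le_rpow_of_exponent_ge hb0 hb1 (by linarith)) (rpow_nonneg hb0.le _)
          (inv_nonneg.2 hε.le)

lemma dirichletDensity_update {K : ℕ} (α : Fin K → ℝ) (k : Fin K) (t : ℝ)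
    {x : Fin (K - 1) → ℝ} (hx : x ∈ openSimplex K) :
    dirichletDensity (Function.update α k t) x =
      bary K k x ^ (t - α k) * dirichletDensity α x := by
  rw [dirichletDensity, dirichletDensity,
    Finset.prod_eq_mul_prod_sdiff_singleton_of_mem (Finset.mem_univ k),
    Finset.prod_eq_mul_prod_sdiff_singleton_of_mem (Finset.mem_univ k)
      (f := fun j => bary K j x ^ (α j - 1)),
    Function.update_self, ← mul_assoc, ← rpow_add (bary_pos hx k), sub_add_sub_cancel]
  congr 1
  exact Finset.prod_congr rfl fun j hj => by
    rw [Function.update_of_ne (by simpa using hj)]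

theorem hasDerivAt_integral_dirichletDensity_update {n : ℕ} (α : Fin (n + 1) → ℝ)
    (hα : ∀ k, 0 < α k) (k : Fin (n + 1)) :
    HasDerivAt (fun t => ∫ x in openSimplex (n + 1), dirichletDensity (Function.update α k t) x)
      (∫ x in openSimplex (n + 1), log (bary (n + 1) k x) * dirichletDensity α x) (α k) := by
  have ha := hα k
  have hS := measurableSet_openSimplex (n + 1)
  have hbound : ∀ᵐ x ∂volume.restrict (openSimplex (n + 1)),
      ∀ t ∈ Metric.ball (α k) (α k / 2),
        ‖log (bary (n + 1) k x) * dirichletDensity (Function.update α k t) x‖ ≤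
          (α k / 4)⁻¹ * dirichletDensity (Function.update α k (α k / 4)) x := by
    filter_upwards [ae_restrict_mem hS] with x hx t ht
    have ht' : α k / 2 < t := by
      rw [Metric.mem_ball, Real.dist_eq, abs_sub_lt_iff] at ht
      linarith [ht.2]
    rw [dirichletDensity_update α k t hx, dirichletDensity_update α k (α k / 4) hx, norm_mul,
      norm_mul, Real.norm_eq_abs, norm_of_nonneg (rpow_nonneg (bary_pos hx k).le _),
      norm_of_nonneg (dirichletDensity_nonneg α hx), ← mul_assoc, ← mul_assoc]
    exact mul_le_mul_of_nonneg_right (abs_log_mul_rpow_le (bary_pos hx k) (bary_le_one hx k)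
      (by positivity) (by linarith)) (dirichletDensity_nonneg α hx)
  have hderiv : ∀ᵐ x ∂volume.restrict (openSimplex (n + 1)),
      ∀ t ∈ Metric.ball (α k) (α k / 2),
        HasDerivAt (fun t => dirichletDensity (Function.update α k t) x)
          (log (bary (n + 1) k x) * dirichletDensity (Function.update α k t) x) t := by
    filter_upwards [ae_restrict_mem hS] with x hx t _
    simp_rw [dirichletDensity_update α k _ hx]
    refine ((((hasDerivAt_id t).sub_const (α k)).const_rpow (bary_pos hx k)).mul_const
      _).congr_deriv ?_
    simp only [id, mul_one, mul_assoc]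
  have key := hasDerivAt_integral_of_dominated_loc_of_deriv_le
    (Metric.ball_mem_nhds (α k) (half_pos ha))
    (Filter.Eventually.of_forall fun t => (measurable_dirichletDensity _).aestronglyMeasurable)
    (by rw [Function.update_eq_self]; exact integrableOn_dirichletDensity α hα)
    ((measurable_bary _ k).log.mul (measurable_dirichletDensity _)).aestronglyMeasurable
    hbound ((integrableOn_dirichletDensity _ (update_pos hα k (by positivity))).const_mul _)
    hderiv
  simpa using key.2

theorem integral_log_bary_mul_dirichletDensity_general
    (K : ℕ) (α : Fin K → ℝ) (hα : ∀ k, 0 < α k) (k : Fin K) :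
    ∫ x in openSimplex K, Real.log (bary K k x) * dirichletDensity α x =
      (digamma (α k) - digamma (∑ j, α j)) * multiBeta α := by
  obtain ⟨n, rfl⟩ : ∃ n, K = n + 1 := Nat.exists_eq_add_one.2 k.pos
  have hB : (fun t => ∫ x in openSimplex (n + 1), dirichletDensity (Function.update α k t) x)
      =ᶠ[nhds (α k)] fun t => multiBeta (Function.update α k t) := by
    filter_upwards [lt_mem_nhds (hα k)] with t ht
    exact integral_dirichletDensity _ (update_pos hα k ht)
  exact ((hasDerivAt_integral_dirichletDensity_update α hα k).congr_of_eventuallyEq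
    hB.symm).unique (hasDerivAt_multiBeta_update α hα k)

/-- **Expected log-probability under a Dirichlet distribution.**  For `K ≥ 2`
and `α` with positive entries and `α₀ = ∑ k, α k`, for every `k`,
`∫_S log(X_k) f_α = (ψ(α_k) − ψ(α₀)) · B(α)`; i.e. under `Dir(α)`,
`E[log p_k] = ψ(α_k) − ψ(α₀)`. -/
theorem integral_log_bary_mul_dirichletDensity
    (K : ℕ) (hK : 2 ≤ K) (α : Fin K → ℝ) (hα : ∀ k, 0 < α k) (k : Fin K) :
    ∫ x in openSimplex K, Real.log (bary K k x) * dirichletDensity α x =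
      (digamma (α k) - digamma (∑ j, α j)) * multiBeta α :=
  integral_log_bary_mul_dirichletDensity_general K α hα k
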